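/- Let R be a valuation domain with field of fractions Q, and let 0 → A → V → U → 0 be a short exact sequence of R-modules in which A is bounded (rA = 0 for some nonzero r ∈ R). If Ext^1_R(Q, U) = 0, then Ext^1_R(Q, V) = 0. -/

import Mathlib

open CategoryTheory

/-- The first Ext group `Ext¹_R(M, N)` of two `R`-modules, as an object of `ModuleCat R`. -/
noncomputable def ext1 (R : Type) [CommRing R] (M N : ModuleCat R) : ModuleCat R :=
  ((Ext R (ModuleCat R) 1).obj (Opposite.op M)).obj N

open LinearMap in
theorem key_lift {R : Type u} [CommRing R]
    {P1 : Type u1} {P0 : Type u0} {QM : Type uq} {A : Type uA} [AddCommGroup P1] [AddCommGroup P0] [AddCommGroup QM] [AddCommGroup A]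
    [Module R P1] [Module R P0] [Module R QM] [Module R A]
    (d1 : P1 →ₗ[R] P0) (π : P0 →ₗ[R] QM)
    (h10 : range d1 = ker π)
    (r : R) (rinv : QM →ₗ[R] QM) (hrinv : ∀ q, r • rinv q = q)
    (hP0 : Module.Projective R P0) (hπ : Function.Surjective π)
    (hA : ∀ a : A, r • a = 0)
    (θ : P1 →ₗ[R] A) (hθ : ker d1 ≤ ker θ) :
    ∃ ρ : P0 →ₗ[R] A, ρ.comp d1 = θ := by
  -- factor θ through the range of d1
  set φ : range d1 →ₗ[R] A :=
    ((ker d1).liftQ θ hθ).comp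
      (d1.quotKerEquivRange.symm : range d1 →ₗ[R] P1 ⧸ ker d1) with hφ
  have hφd1 : ∀ y : P1, φ (d1.rangeRestrict y) = θ y := by
    intro y
    have h1 : d1.quotKerEquivRange (Submodule.Quotient.mk y) = d1.rangeRestrict y := by
      apply Subtype.ext
      simp [LinearMap.quotKerEquivRange_apply_mk]
    simp [hφ, ← h1]
  -- lift rinv ∘ π along π
  obtain ⟨α, hα⟩ := Module.projective_lifting_property π (rinv.comp π) hπ
  have hαapp : ∀ x, π (α x) = rinv (π x) := fun x => LinearMap.congr_fun hα x
  -- β := r • α - id maps into range d1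
  have hβmem : ∀ x : P0, r • α x - x ∈ range d1 := by
    intro x
    rw [h10, mem_ker, map_sub, map_smul, hαapp, hrinv, sub_self]
  set β : P0 →ₗ[R] range d1 := codRestrict (range d1) (r • α - LinearMap.id) hβmem with hβ
  refine ⟨-(φ.comp β), ?_⟩
  ext y
  have hπd1 : π (d1 y) = 0 := by
    have : d1 y ∈ ker π := h10 ▸ mem_range_self d1 y
    exact this
  have hαd1 : α (d1 y) ∈ range d1 := by
    rw [h10, mem_ker, hαapp, hπd1, map_zero]
  have hβd1 : β (d1 y) = r • (⟨α (d1 y), hαd1⟩ : range d1) - d1.rangeRestrict y := by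
    apply Subtype.ext
    simp [hβ]
  simp only [LinearMap.coe_comp, Function.comp_apply, LinearMap.neg_apply, hβd1]
  rw [map_sub, map_smul, hA, zero_sub, neg_neg, hφd1]

open LinearMap in
/-- Main module-level lemma. -/
theorem main_lift {R : Type u} [CommRing R]
    {P2 : Type u2} {P1 : Type u1} {P0 : Type u0} {QM : Type uq} {A : Type uA} {V : Type uV}
    {U : Type uU}
    [AddCommGroup P2] [AddCommGroup P1] [AddCommGroup P0] [AddCommGroup QM]
    [AddCommGroup A] [AddCommGroup V] [AddCommGroup U]
    [Module R P2] [Module R P1] [Module R P0] [Module R QM]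
    [Module R A] [Module R V] [Module R U]
    (d2 : P2 →ₗ[R] P1) (d1 : P1 →ₗ[R] P0) (π : P0 →ₗ[R] QM)
    (h21 : range d2 = ker d1) (h10 : range d1 = ker π)
    (r : R) (rinv : QM →ₗ[R] QM) (hrinv : ∀ q, r • rinv q = q)
    (hP0 : Module.Projective R P0) (hπ : Function.Surjective π)
    (f : A →ₗ[R] V) (g : V →ₗ[R] U)
    (hf : Function.Injective f) (hg : Function.Surjective g)
    (hfg : range f = ker g)
    (hA : ∀ a : A, r • a = 0)
    (hU : ∀ σ : P1 →ₗ[R] U, σ.comp d2 = 0 → ∃ τ : P0 →ₗ[R] U, τ.comp d1 = σ)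
    (θ : P1 →ₗ[R] V) (hθ : θ.comp d2 = 0) :
    ∃ ρ : P0 →ₗ[R] V, ρ.comp d1 = θ := by
  have hd1d2 : d1.comp d2 = 0 := by
    ext x
    have : d2 x ∈ ker d1 := h21 ▸ mem_range_self d2 x
    exact this
  -- push to U, solve there
  obtain ⟨τ0, hτ0⟩ := hU (g.comp θ) (by rw [comp_assoc, hθ, comp_zero])
  -- lift τ0 : P0 → U to τ : P0 → V
  obtain ⟨τ, hτ⟩ := Module.projective_lifting_property g τ0 hg
  -- η := θ - τ ∘ d1 lands in range f
  set η : P1 →ₗ[R] V := θ - τ.comp d1 with hη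
  have hηmem : ∀ y : P1, η y ∈ range f := by
    intro y
    rw [hfg, mem_ker]
    have h1 : g (τ (d1 y)) = τ0 (d1 y) := LinearMap.congr_fun hτ (d1 y)
    have h2 : τ0 (d1 y) = g (θ y) := LinearMap.congr_fun hτ0 y
    simp [hη, h1, h2]
  set e : A ≃ₗ[R] range f := LinearEquiv.ofInjective f hf with he
  set θA : P1 →ₗ[R] A := (e.symm : range f →ₗ[R] A).comp (codRestrict (range f) η hηmem)
    with hθA
  have hfθA : ∀ y, f (θA y) = η y := by
    intro y
    have : (e (θA y) : V) = η y := by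
      simp [hθA, he]
    rwa [he] at this
    -- e a = f a
  have hθAd2 : ker d1 ≤ ker θA := by
    rw [← h21]
    rintro _ ⟨x, rfl⟩
    have : f (θA (d2 x)) = 0 := by
      rw [hfθA]
      have h1 : θ (d2 x) = 0 := LinearMap.congr_fun hθ x
      have h2 : d1 (d2 x) = 0 := LinearMap.congr_fun hd1d2 x
      simp [hη, h1, h2]
    exact mem_ker.2 (hf (by simpa using this))
  obtain ⟨ρA, hρA⟩ := key_lift d1 π h10 r rinv hrinv hP0 hπ hA θA hθAd2
  refine ⟨τ + f.comp ρA, ?_⟩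
  ext y
  have h3 : ρA (d1 y) = θA y := LinearMap.congr_fun hρA y
  simp [h3, hfθA, hη]

/-- Translation: `ext1` is subsingleton iff the Hom complex is exact at 1. -/
lemma subsingleton_ext1_iff {R : Type} [CommRing R] {Q : ModuleCat R}
    (P : CategoryTheory.ProjectiveResolution Q) (W : ModuleCat R) :
    Subsingleton (ext1 R Q W) ↔ (P.complex.linearYonedaObj R W).ExactAt 1 := by
  rw [HomologicalComplex.exactAt_iff_isZero_homology]
  constructor
  · intro h
    haveI : Subsingleton (((Ext R (ModuleCat R) 1).obj (Opposite.op Q)).obj W) := h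
    exact Limits.IsZero.of_iso (ModuleCat.isZero_of_subsingleton _) (P.isoExt 1 W).symm
  · intro h
    have h2 : Limits.IsZero (ext1 R Q W) := Limits.IsZero.of_iso h (P.isoExt 1 W)
    have h3 : (𝟙 (ext1 R Q W)) = 0 := h2.eq_of_src _ _
    refine ⟨fun a b => ?_⟩
    calc a = (𝟙 (ext1 R Q W)) a := rfl
    _ = (0 : ext1 R Q W ⟶ ext1 R Q W) a := by rw [h3]
    _ = (𝟙 (ext1 R Q W)) b := by rw [h3]; rfl
    _ = b := rfl

/-- Further translation to a concrete lifting statement. -/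
lemma exactAt_one_iff {R : Type} [CommRing R] {Q : ModuleCat R}
    (P : CategoryTheory.ProjectiveResolution Q) (W : ModuleCat R) :
    (P.complex.linearYonedaObj R W).ExactAt 1 ↔
      ∀ σ : P.complex.X 1 →ₗ[R] W, σ.comp (P.complex.d 2 1).hom = 0 →
        ∃ τ : P.complex.X 0 →ₗ[R] W, τ.comp (P.complex.d 1 0).hom = σ := by
  rw [HomologicalComplex.exactAt_iff' _ 0 1 2 (by simp) (by simp),
    ShortComplex.moduleCat_exact_iff]
  constructor
  · intro h σ hσ
    obtain ⟨τ, hτ⟩ := h (ModuleCat.ofHom σ) (by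
      apply ModuleCat.hom_ext; exact hσ)
    exact ⟨τ.hom, by exact congrArg ModuleCat.Hom.hom hτ⟩
  · intro h σ hσ
    obtain ⟨τ, hτ⟩ := h σ.hom (by exact congrArg ModuleCat.Hom.hom hσ)
    exact ⟨ModuleCat.ofHom τ, by apply ModuleCat.hom_ext; exact hτ⟩

/-- Let `R` be a valuation domain with field of fractions `Q`, and let
`0 → A → V → U → 0` be a short exact sequence of `R`-modules in which `A` is bounded
(`rA = 0` for some nonzero `r : R`). If `Ext¹_R(Q, U) = 0`, then `Ext¹_R(Q, V) = 0`. -/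
theorem ext_Q_V_eq_zero_of_ext_Q_U_eq_zero (R : Type) [CommRing R] [IsDomain R]
    (hchain : ∀ I J : Ideal R, I ≤ J ∨ J ≤ I)
    (A V U : ModuleCat R) (f : A →ₗ[R] V) (g : V →ₗ[R] U)
    (hf : Function.Injective f) (hg : Function.Surjective g)
    (hfg : LinearMap.range f = LinearMap.ker g)
    (hA : ∃ r : R, r ≠ 0 ∧ ∀ a : A, r • a = 0)
    (hU : Subsingleton (ext1 R (ModuleCat.of R (FractionRing R)) U)) :
    Subsingleton (ext1 R (ModuleCat.of R (FractionRing R)) V) := by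
  obtain ⟨r, hr0, hrA⟩ := hA
  obtain ⟨P⟩ := HasProjectiveResolution.out (Z := ModuleCat.of R (FractionRing R))
  rw [subsingleton_ext1_iff P, exactAt_one_iff P] at hU ⊢
  -- data for the key lemma
  have h21 : LinearMap.range (P.complex.d 2 1).hom =
      LinearMap.ker (P.complex.d 1 0).hom :=
    (ShortComplex.moduleCat_exact_iff_range_eq_ker _).mp (P.exact_succ 0)
  have h10 : LinearMap.range (P.complex.d 1 0).hom =
      LinearMap.ker (P.π.f 0).hom :=
    (ShortComplex.moduleCat_exact_iff_range_eq_ker _).mp P.exact₀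
  have hπ : Function.Surjective (P.π.f 0).hom :=
    (ModuleCat.epi_iff_surjective _).mp inferInstance
  have hP0 : Module.Projective R (P.complex.X 0) :=
    inferInstance
  -- the inverse of multiplication by r on the fraction field
  set c : FractionRing R := (algebraMap R (FractionRing R) r)⁻¹ with hc
  set rinv : FractionRing R →ₗ[R] FractionRing R :=
    (LinearMap.lsmul (FractionRing R) (FractionRing R) c).restrictScalars R with hrinv'
  have hrinv : ∀ q : FractionRing R, r • rinv q = q := by
    intro q
    have hne : algebraMap R (FractionRing R) r ≠ 0 := by
      simpa using (IsFractionRing.to_map_eq_zero_iff (K := FractionRing R)).not.mpr hr0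
    simp only [hrinv', LinearMap.restrictScalars_apply, LinearMap.lsmul_apply, hc,
      Algebra.smul_def, smul_eq_mul]
    field_simp
    simp [hne]
  -- adjust the target of `π`
  set ι := HomologicalComplex.singleObjXSelf (V := ModuleCat R) (ComplexShape.down ℕ) 0
    (ModuleCat.of R (FractionRing R)) with hι
  have hιinj : Function.Injective ι.hom.hom := by
    rw [← ModuleCat.mono_iff_injective]
    infer_instance
  have hιsurj : Function.Surjective ι.hom.hom := by
    rw [← ModuleCat.epi_iff_surjective]
    infer_instance
  set π0 : P.complex.X 0 →ₗ[R] FractionRing R := ι.hom.hom.comp (P.π.f 0).hom with hπ0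
  have hπ0surj : Function.Surjective π0 := hιsurj.comp hπ
  have h10' : LinearMap.range (P.complex.d 1 0).hom = LinearMap.ker π0 := by
    rw [h10]
    ext x
    constructor
    · intro hx
      have h1 : (P.π.f 0).hom x = 0 := hx
      show (ι.hom.hom ∘ₗ (P.π.f 0).hom) x = 0
      rw [LinearMap.comp_apply, h1, map_zero]
    · intro hx
      have h1 : ι.hom.hom ((P.π.f 0).hom x) = 0 := hx
      show (P.π.f 0).hom x = 0
      apply hιinj
      rw [h1, map_zero]
  intro θ hθ
  exact main_lift (P2 := P.complex.X 2) (P1 := P.complex.X 1) (P0 := P.complex.X 0)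
    (QM := FractionRing R) (A := A) (V := V) (U := U) (P.complex.d 2 1).hom (P.complex.d 1 0).hom π0 h21 h10' r rinv hrinv
    hP0 hπ0surj f g hf hg hfg (fun a => hrA a) hU θ hθ
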